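/- There exists a P-solvable MAPF instance such that the minimum flowtime over all solutions is strictly smaller than the flowtime of every solution that is consistent with some priority ordering; i.e., prioritized planning is suboptimal for the flowtime objective in general on the class of P-solvable MAPF instances, no matter which priority ordering is used. -/

import Mathlib

/-- Two (space-time) paths have a vertex collision: same vertex at the same time. -/
def VCol {V : Type} (π σ : ℕ → V) : Prop := ∃ t, π t = σ t

/-- Two (space-time) paths have an edge collision: they traverse the same edge in
opposite directions at the same time. -/
def ECol {V : Type} (π σ : ℕ → V) : Prop := ∃ t, π t = σ (t + 1) ∧ π (t + 1) = σ t

/-- Two paths collide if they have a vertex collision or an edge collision. -/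
def Collide {V : Type} (π σ : ℕ → V) : Prop := VCol π σ ∨ ECol π σ

/-- `π : ℕ → V` is a path from `s` to `t` in `G`: it starts at `s`, at each time step
it stays put or moves along an edge of `G`, and it is eventually always at `t`. -/
def IsPathFun {V : Type} (G : SimpleGraph V) (s t : V) (π : ℕ → V) : Prop :=
  π 0 = s ∧ (∀ n, π (n + 1) = π n ∨ G.Adj (π n) (π (n + 1))) ∧ ∃ T, ∀ n ≥ T, π n = t

/-- The arrival time of a path at a target vertex `tgt`: the least time `T` such that
the path is at `tgt` at all times `≥ T`. -/
noncomputable def arrivalTime {V : Type} (tgt : V) (π : ℕ → V) : ℕ :=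
  sInf {T | ∀ n ≥ T, π n = tgt}

/-- A MAPF instance: a connected undirected graph and `M` agents with pairwise distinct
start vertices and pairwise distinct target vertices. -/
structure MAPF where
  V : Type
  G : SimpleGraph V
  conn : G.Connected
  M : ℕ
  s : Fin M → V
  t : Fin M → V
  s_inj : Function.Injective s
  t_inj : Function.Injective t

/-- `π` is a path for agent `i` of the MAPF instance `P`. -/
def MAPF.IsPath (P : MAPF) (i : Fin P.M) (π : ℕ → P.V) : Prop :=
  IsPathFun P.G (P.s i) (P.t i) π

/-- The arrival time of agent `i`'s path `π`. -/
noncomputable def MAPF.arr (P : MAPF) (i : Fin P.M) (π : ℕ → P.V) : ℕ :=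
  arrivalTime (P.t i) π

/-- A solution: a path for each agent such that no two paths collide. -/
def MAPF.Solution (P : MAPF) (π : Fin P.M → ℕ → P.V) : Prop :=
  (∀ i, P.IsPath i (π i)) ∧ ∀ i j, i ≠ j → ¬ Collide (π i) (π j)

/-- A priority ordering: a strict partial order (irreflexive and transitive relation)
on the agents. -/
def IsPO {M : ℕ} (r : Fin M → Fin M → Prop) : Prop :=
  (∀ i, ¬ r i i) ∧ ∀ i j k, r i j → r j k → r i k

/-- A total priority ordering: a strict total order on the agents. -/
def IsTotalPO {M : ℕ} (r : Fin M → Fin M → Prop) : Prop :=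
  IsPO r ∧ ∀ i j : Fin M, i ≠ j → r i j ∨ r j i

/-- A plan `π` is consistent with a priority ordering `r`: for every agent `i`, the
arrival time of `π i` is the minimum arrival time over all paths for agent `i` that
have no collision with `π j` for every higher-priority agent `j` (`r j i`). -/
def MAPF.Consistent (P : MAPF) (π : Fin P.M → ℕ → P.V)
    (r : Fin P.M → Fin P.M → Prop) : Prop :=
  ∀ i, IsLeast {T | ∃ σ, P.IsPath i σ ∧ (∀ j, r j i → ¬ Collide σ (π j)) ∧ P.arr i σ = T}
    (P.arr i (π i))

/-- A MAPF instance is P-solvable if it admits a solution consistent with some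
priority ordering. -/
def MAPF.PSolvable (P : MAPF) : Prop :=
  ∃ π r, IsPO r ∧ P.Solution π ∧ P.Consistent π r

/-- The flowtime of a plan: the sum of the arrival times of all agents. -/
noncomputable def MAPF.flowtime (P : MAPF) (π : Fin P.M → ℕ → P.V) : ℕ :=
  ∑ i, P.arr i (π i)

/-- The makespan of a plan: the maximum of the arrival times of all agents. -/
noncomputable def MAPF.makespan (P : MAPF) (π : Fin P.M → ℕ → P.V) : ℕ :=
  Finset.univ.sup fun i => P.arr i (π i)

/-- A MAPF instance is well-formed if every agent has a (finite) walk from its start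
vertex to its target vertex that visits neither the start vertex nor the target vertex
of any other agent. -/
def MAPF.WellFormed (P : MAPF) : Prop :=
  ∀ i, ∃ w : P.G.Walk (P.s i) (P.t i),
    ∀ j, j ≠ i → P.s j ∉ w.support ∧ P.t j ∉ w.support

/-! The instance is a 5-cycle `0-1-2-3-4-0` with a pendant vertex `5` attached to `0`. Agent `0`
goes from `1` to `0`, agent `1` from the pendant vertex `5` to `2`.

If agent `1` does not have priority over agent `0`, agent `0` plans alone, enters `0` at time `1`
and parks there, which seals agent `1` in at `5`; so every consistent solution gives agent `1`
priority. Agent `1` then takes the short arc `5,0,1,2` (arrival `3`), which forces agent `0` around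
the long arc (arrival `4`): flowtime `7`. Jointly, agent `0` waits one step before entering `0` and
agent `1` takes the long arc `5,0,4,3,2`: flowtime `2 + 4 = 6`. -/

section Paths

variable {V : Type}

theorem Collide.symm {π σ : ℕ → V} (h : Collide π σ) : Collide σ π := by
  rcases h with ⟨t, ht⟩ | ⟨t, h₁, h₂⟩
  · exact Or.inl ⟨t, ht.symm⟩
  · exact Or.inr ⟨t, h₂.symm, h₁.symm⟩

theorem not_collide_of_eventually_eq {π σ : ℕ → V} {T : ℕ} {a b : V} (hab : a ≠ b)
    (hπ : ∀ n ≥ T, π n = a) (hσ : ∀ n ≥ T, σ n = b)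
    (hpre : ∀ t < T, π t ≠ σ t ∧ ¬(π t = σ (t + 1) ∧ π (t + 1) = σ t)) :
    ¬ Collide π σ := by
  rintro (⟨t, ht⟩ | ⟨t, h₁, h₂⟩)
  · rcases lt_or_ge t T with hlt | hge
    · exact (hpre t hlt).1 ht
    · exact hab (by rw [← hπ t hge, ← hσ t hge, ht])
  · rcases lt_or_ge t T with hlt | hge
    · exact (hpre t hlt).2 ⟨h₁, h₂⟩
    · exact hab (by rw [← hπ t hge, ← hσ (t + 1) (by omega), h₁])

theorem arrivalTime_le {tgt : V} {π : ℕ → V} {T : ℕ} (h : ∀ n ≥ T, π n = tgt) :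
    arrivalTime tgt π ≤ T :=
  Nat.sInf_le h

theorem IsPathFun.eq_of_arrivalTime_le {G : SimpleGraph V} {s t : V} {π : ℕ → V}
    (hπ : IsPathFun G s t π) {n : ℕ} (hn : arrivalTime t π ≤ n) : π n = t :=
  Nat.sInf_mem hπ.2.2 n hn

theorem IsPathFun.eq_start_of_neighbor_occupied {G : SimpleGraph V} {s t w : V} {σ τ : ℕ → V}
    (hσ : IsPathFun G s t σ) (hnbr : ∀ v, G.Adj s v → v = w) (hτ : ∀ n ≥ 1, τ n = w)
    (hnc : ¬ Collide σ τ) (n : ℕ) : σ n = s := by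
  induction n with
  | zero => exact hσ.1
  | succ n ih =>
    rcases hσ.2.1 n with h | h
    · rw [h, ih]
    · rw [ih] at h
      exact absurd ((hnbr _ h).trans (hτ (n + 1) (by omega)).symm)
        fun he => hnc (Or.inl ⟨_, he⟩)

def walkThenStay (w : List V) (v : V) (n : ℕ) : V :=
  w.getD n v

theorem walkThenStay_of_length_le {w : List V} {v : V} {n : ℕ} (hn : w.length ≤ n) :
    walkThenStay w v n = v :=
  List.getD_eq_default _ _ hn

theorem isPathFun_walkThenStay {G : SimpleGraph V} {w : List V} {s v : V}
    (hs : walkThenStay w v 0 = s)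
    (hstep : ∀ n < w.length, walkThenStay w v (n + 1) = walkThenStay w v n ∨
      G.Adj (walkThenStay w v n) (walkThenStay w v (n + 1))) :
    IsPathFun G s v (walkThenStay w v) := by
  refine ⟨hs, fun n => ?_, w.length, fun n hn => walkThenStay_of_length_le hn⟩
  rcases lt_or_ge n w.length with hlt | hge
  · exact hstep n hlt
  · exact Or.inl (by rw [walkThenStay_of_length_le hge, walkThenStay_of_length_le (by omega)])

theorem not_collide_walkThenStay {w w' : List V} {v v' : V} (hv : v ≠ v')
    (hpre : ∀ t < max w.length w'.length,
      walkThenStay w v t ≠ walkThenStay w' v' t ∧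
      ¬(walkThenStay w v t = walkThenStay w' v' (t + 1) ∧
        walkThenStay w v (t + 1) = walkThenStay w' v' t)) :
    ¬ Collide (walkThenStay w v) (walkThenStay w' v') :=
  not_collide_of_eventually_eq hv (fun _ hn => walkThenStay_of_length_le (le_of_max_le_left hn))
    (fun _ hn => walkThenStay_of_length_le (le_of_max_le_right hn)) hpre

theorem arrivalTime_walkThenStay_le (w : List V) (v : V) :
    arrivalTime v (walkThenStay w v) ≤ w.length :=
  arrivalTime_le fun _ => walkThenStay_of_length_le

end Paths

namespace MAPF

variable {P : MAPF} {π : Fin P.M → ℕ → P.V} {r : Fin P.M → Fin P.M → Prop}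

theorem Consistent.arr_le (h : P.Consistent π r) {i : Fin P.M} {σ : ℕ → P.V}
    (hσ : P.IsPath i σ) (havoid : ∀ j, r j i → ¬ Collide σ (π j)) :
    P.arr i (π i) ≤ P.arr i σ :=
  (h i).2 ⟨σ, hσ, havoid, rfl⟩

theorem Consistent.arr_le_of_forall_not (h : P.Consistent π r) {i : Fin P.M}
    (hi : ∀ j, ¬ r j i) {σ : ℕ → P.V} (hσ : P.IsPath i σ) :
    P.arr i (π i) ≤ P.arr i σ :=
  h.arr_le hσ fun j hj => absurd hj (hi j)

end MAPF

namespace PendantCycle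

def graph : SimpleGraph (Fin 6) :=
  SimpleGraph.fromRel fun a b => (a, b) ∈ [(0, 1), (1, 2), (2, 3), (3, 4), (4, 0), (0, 5)]

instance : DecidableRel graph.Adj := fun a b =>
  inferInstanceAs (Decidable (a ≠ b ∧ (_ ∨ _)))

theorem graph_connected : graph.Connected := by
  have adj : ∀ a b : Fin 6, graph.Adj a b → graph.Reachable a b := fun _ _ h => h.reachable
  have reach : ∀ v : Fin 6, graph.Reachable 0 v := by
    intro v
    fin_cases v
    · rfl
    · exact adj 0 1 (by decide)
    · exact (adj 0 1 (by decide)).trans (adj 1 2 (by decide))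
    · exact (adj 0 4 (by decide)).trans (adj 4 3 (by decide))
    · exact adj 0 4 (by decide)
    · exact adj 0 5 (by decide)
  exact (SimpleGraph.connected_iff _).2 ⟨fun u v => (reach u).symm.trans (reach v), ⟨0⟩⟩

abbrev problem : MAPF where
  V := Fin 6
  G := graph
  conn := graph_connected
  M := 2
  s := ![1, 5]
  t := ![0, 2]
  s_inj := by decide
  t_inj := by decide

theorem flowtime_eq (π : Fin 2 → ℕ → Fin 6) :
    problem.flowtime π = arrivalTime 0 (π 0) + arrivalTime 2 (π 1) :=
  Fin.sum_univ_two _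

theorem three_le_arrivalTime_one {σ : ℕ → Fin 6} (hσ : IsPathFun graph 5 2 σ) :
    3 ≤ arrivalTime 2 σ := by
  by_contra! h
  have key : ∀ x : Fin 6, (x = 5 ∨ graph.Adj 5 x) → ¬(2 = x ∨ graph.Adj x 2) := by decide
  have h₂ : σ 2 = 2 := hσ.eq_of_arrivalTime_le (by omega)
  exact key (σ 1) (hσ.1 ▸ hσ.2.1 0) (h₂ ▸ hσ.2.1 1)

theorem short_arc_of_arrivalTime_le_three {σ : ℕ → Fin 6} (hσ : IsPathFun graph 5 2 σ)
    (h : arrivalTime 2 σ ≤ 3) : σ 1 = 0 ∧ σ 2 = 1 := by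
  have key : ∀ x y : Fin 6, (x = 5 ∨ graph.Adj 5 x) → (y = x ∨ graph.Adj x y) →
      (2 = y ∨ graph.Adj y 2) → x = 0 ∧ y = 1 := by decide
  exact key _ _ (hσ.1 ▸ hσ.2.1 0) (hσ.2.1 1) (hσ.eq_of_arrivalTime_le h ▸ hσ.2.1 2)

theorem four_le_arrivalTime_zero {σ τ : ℕ → Fin 6} (hσ : IsPathFun graph 1 0 σ)
    (hτ : τ 1 = 0 ∧ τ 2 = 1) (hnc : ¬ Collide σ τ) : 4 ≤ arrivalTime 0 σ := by
  by_contra! h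
  have key : ∀ x y : Fin 6, (x = 1 ∨ graph.Adj 1 x) → (y = x ∨ graph.Adj x y) →
      (0 = y ∨ graph.Adj y 0) → x ≠ 0 → y ≠ 1 → ¬(x = 1 ∧ y = 0) → False := by
    decide
  have h₃ : σ 3 = 0 := hσ.eq_of_arrivalTime_le (by omega)
  refine key _ _ (hσ.1 ▸ hσ.2.1 0) (hσ.2.1 1) (h₃ ▸ hσ.2.1 2) ?_ ?_ ?_
  · exact fun he => hnc (Or.inl ⟨1, he.trans hτ.1.symm⟩)
  · exact fun he => hnc (Or.inl ⟨2, he.trans hτ.2.symm⟩)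
  · exact fun he => hnc (Or.inr ⟨1, he.1.trans hτ.2.symm, he.2.trans hτ.1.symm⟩)

def prioritizedPlan : Fin 2 → ℕ → Fin 6 :=
  ![walkThenStay [1, 2, 3, 4] 0, walkThenStay [5, 0, 1] 2]

def jointPlan : Fin 2 → ℕ → Fin 6 :=
  ![walkThenStay [1, 1] 0, walkThenStay [5, 0, 4, 3] 2]

theorem solution_of_two_paths {π : Fin 2 → ℕ → Fin 6} (h₀ : problem.IsPath 0 (π 0))
    (h₁ : problem.IsPath 1 (π 1)) (hnc : ¬ Collide (π 0) (π 1)) : problem.Solution π := by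
  refine ⟨Fin.forall_fin_two.2 ⟨h₀, h₁⟩, ?_⟩
  simp only [Fin.forall_fin_two]
  exact ⟨⟨absurd rfl, fun _ => hnc⟩, fun _ => hnc ∘ Collide.symm, absurd rfl⟩

theorem prioritizedPlan_solution : problem.Solution prioritizedPlan :=
  solution_of_two_paths (isPathFun_walkThenStay (by decide) (by decide))
    (isPathFun_walkThenStay (by decide) (by decide))
    (not_collide_walkThenStay (by decide) (by decide))

theorem jointPlan_solution : problem.Solution jointPlan :=
  solution_of_two_paths (isPathFun_walkThenStay (by decide) (by decide))
    (isPathFun_walkThenStay (by decide) (by decide))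
    (not_collide_walkThenStay (by decide) (by decide))

theorem flowtime_jointPlan_le : problem.flowtime jointPlan ≤ 6 := by
  rw [flowtime_eq]
  exact add_le_add (arrivalTime_walkThenStay_le _ _) (arrivalTime_walkThenStay_le _ _)

theorem pSolvable : problem.PSolvable := by
  have hsol := prioritizedPlan_solution
  refine ⟨prioritizedPlan, fun i j => i = 1 ∧ j = 0, ⟨by decide, by decide⟩, hsol,
    Fin.forall_fin_two.2
      ⟨⟨⟨_, hsol.1 0, fun j hj => hj.1 ▸ hsol.2 0 1 (by decide), rfl⟩, ?_⟩,
        ⟨⟨_, hsol.1 1, fun j hj => absurd hj.2 (by decide), rfl⟩, ?_⟩⟩⟩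
  · rintro _ ⟨σ, hσ, havoid, rfl⟩
    exact (arrivalTime_walkThenStay_le _ _).trans
      (four_le_arrivalTime_zero hσ (by decide) (havoid 1 ⟨rfl, rfl⟩))
  · rintro _ ⟨σ, hσ, -, rfl⟩
    exact (arrivalTime_walkThenStay_le _ _).trans (three_le_arrivalTime_one hσ)

theorem agent_one_has_priority {π : Fin 2 → ℕ → Fin 6} {r : Fin 2 → Fin 2 → Prop}
    (hr : IsPO r) (hπ : problem.Solution π) (hc : problem.Consistent π r) : r 1 0 := by
  by_contra h10
  have hA : arrivalTime 0 (π 0) ≤ 1 :=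
    (hc.arr_le_of_forall_not (Fin.forall_fin_two.2 ⟨hr.1 0, h10⟩)
      (isPathFun_walkThenStay (w := [1]) (by decide) (by decide))).trans
      (arrivalTime_walkThenStay_le _ _)
  have hstuck := (hπ.1 1).eq_start_of_neighbor_occupied (w := 0) (by decide)
    (fun n hn => (hπ.1 0).eq_of_arrivalTime_le (hA.trans hn)) (hπ.2 1 0 (by decide))
  obtain ⟨T, hT⟩ := (hπ.1 1).2.2
  exact absurd ((hstuck T).symm.trans (hT T le_rfl)) (by decide)

theorem seven_le_flowtime {π : Fin 2 → ℕ → Fin 6} {r : Fin 2 → Fin 2 → Prop}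
    (hr : IsPO r) (hπ : problem.Solution π) (hc : problem.Consistent π r) :
    7 ≤ problem.flowtime π := by
  have h10 := agent_one_has_priority hr hπ hc
  have h01 : ¬ r 0 1 := fun h01 => hr.1 0 (hr.2 0 1 0 h01 h10)
  have hB_le : arrivalTime 2 (π 1) ≤ 3 :=
    (hc.arr_le_of_forall_not (Fin.forall_fin_two.2 ⟨h01, hr.1 1⟩)
      (isPathFun_walkThenStay (w := [5, 0, 1]) (by decide) (by decide))).trans
      (arrivalTime_walkThenStay_le _ _)
  have hA := four_le_arrivalTime_zero (hπ.1 0) (short_arc_of_arrivalTime_le_three (hπ.1 1) hB_le)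
    (hπ.2 0 1 (by decide))
  have hB_ge := three_le_arrivalTime_one (hπ.1 1)
  rw [flowtime_eq]
  omega

end PendantCycle

/-- Prioritized planning is suboptimal for the flowtime objective on P-solvable MAPF
instances: there is a P-solvable instance with a solution whose flowtime is strictly
smaller than the flowtime of every solution consistent with any priority ordering. -/
theorem stmt8 :
    ∃ P : MAPF, P.PSolvable ∧ ∃ πopt, P.Solution πopt ∧
      ∀ (π : Fin P.M → ℕ → P.V) (r : Fin P.M → Fin P.M → Prop),
        IsPO r → P.Solution π → P.Consistent π r →
          P.flowtime πopt < P.flowtime π :=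
  ⟨PendantCycle.problem, PendantCycle.pSolvable, PendantCycle.jointPlan,
    PendantCycle.jointPlan_solution, fun _ _ hr hπ hc =>
      PendantCycle.flowtime_jointPlan_le.trans_lt (PendantCycle.seven_le_flowtime hr hπ hc)⟩
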